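/- arXiv:1409.0125 — 3 statements merged into one kernel-verified Lean document; each statement's English description precedes it below -/
import Mathlib

section
/- If P is any pattern group of depth d and Q = G_P|_{X^[d]} is the group of restrictions to X^[d] of elements of G_P, then Q ≤ P, G_Q = G_P, and Q is minimal; consequently every self-similar group of finite type given by patterns of depth d is represented by a unique minimal pattern group of depth d. -/
open List

/-- The group of automorphisms of the rooted tree `X*` (vertices = words over `X`,
root = empty word, edges `(v, vx)`), as a subgroup of the permutations of `List X`. -/
def treeAut (X : Type*) : Subgroup (Equiv.Perm (List X)) where
  carrier := {f | f [] = [] ∧ ∀ (v : List X) (x : X), ∃ y : X, f (v ++ [x]) = f v ++ [y]}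
  one_mem' := ⟨rfl, fun _ x => ⟨x, rfl⟩⟩
  mul_mem' := by
    rintro f g ⟨hf0, hf⟩ ⟨hg0, hg⟩
    refine ⟨by simp [Equiv.Perm.mul_apply, hg0, hf0], fun v x => ?_⟩
    obtain ⟨y, hy⟩ := hg v x
    obtain ⟨z, hz⟩ := hf (g v) y
    exact ⟨z, by simp [Equiv.Perm.mul_apply, hy, hz]⟩
  inv_mem' := by
    rintro f ⟨hf0, hf⟩
    have h0 : f⁻¹ [] = ([] : List _) := by
      have h : f⁻¹ (f []) = [] := by simp
      rwa [hf0] at h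
    refine ⟨h0, fun v x => ?_⟩
    rcases List.eq_nil_or_concat (f⁻¹ (v ++ [x])) with h | ⟨w, z, hw⟩
    · exfalso
      have h1 : v ++ [x] = f ([] : List _) := by
        have := congrArg (fun t => f t) h
        simpa using this
      rw [hf0] at h1
      simp at h1
    · rw [List.concat_eq_append] at hw
      obtain ⟨y, hy⟩ := hf w z
      have h2 : f w ++ [y] = v ++ [x] := by
        rw [← hy]
        have := congrArg (fun t => f t) hw
        simpa using this.symm
      have h3 := (List.append_inj' h2 rfl).1
      have h4 : w = f⁻¹ v := by rw [← h3]; simp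
      exact ⟨z, by rw [hw, h4]⟩

theorem treeAut.length_apply {X : Type*} {f : Equiv.Perm (List X)} (hf : f ∈ treeAut X)
    (v : List X) : (f v).length = v.length := by
  induction v using List.reverseRecOn with
  | nil => simp [hf.1]
  | append_singleton v x ih =>
      obtain ⟨y, hy⟩ := hf.2 v x
      simp [hy, ih]

/-- The section function: `sectFun f v w` is the word `u` with `f (v ++ w) = f v ++ u`. -/
def sectFun {X : Type*} (f : Equiv.Perm (List X)) (v w : List X) : List X :=
  (f (v ++ w)).drop v.length

theorem treeAut.apply_append {X : Type*} {f : Equiv.Perm (List X)} (hf : f ∈ treeAut X)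
    (v w : List X) : f (v ++ w) = f v ++ sectFun f v w := by
  have hpre : f v <+: f (v ++ w) := by
    induction w using List.reverseRecOn with
    | nil => simp
    | append_singleton w x ih =>
        obtain ⟨y, hy⟩ := hf.2 (v ++ w) x
        rw [← List.append_assoc, hy]
        exact ih.trans (List.prefix_append _ _)
  obtain ⟨t, ht⟩ := hpre
  have hd : sectFun f v w = t := by
    simp only [sectFun]
    rw [← ht, ← treeAut.length_apply hf v, List.drop_left]
  rw [hd, ht]

/-- The section of a tree automorphism `g` at a vertex `v`, as a tree automorphism. -/
def sect {X : Type*} (g : ↥(treeAut X)) (v : List X) : ↥(treeAut X) := by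
  refine ⟨{ toFun := sectFun (g : Equiv.Perm (List X)) v
            invFun := sectFun ((g : Equiv.Perm (List X))⁻¹) ((g : Equiv.Perm (List X)) v)
            left_inv := ?_
            right_inv := ?_ }, ?_, ?_⟩
  · intro w
    show sectFun _ _ (sectFun _ _ _) = w
    have ha := treeAut.apply_append g.2 v w
    simp only [sectFun] at ha ⊢
    rw [← ha, Equiv.Perm.inv_def, Equiv.symm_apply_apply, treeAut.length_apply g.2, List.drop_left]
  · intro w
    have hginv : (g : Equiv.Perm (List X))⁻¹ ∈ treeAut X := (treeAut X).inv_mem g.2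
    show sectFun _ _ (sectFun _ _ _) = w
    have key : (v : List X) ++ sectFun ((g : Equiv.Perm (List X))⁻¹) ((g : Equiv.Perm (List X)) v) w
        = (g : Equiv.Perm (List X))⁻¹ ((g : Equiv.Perm (List X)) v ++ w) := by
      have h1 := treeAut.apply_append hginv ((g : Equiv.Perm (List X)) v) w
      have h2 : (g : Equiv.Perm (List X))⁻¹ ((g : Equiv.Perm (List X)) v) = v := by simp
      rw [h1, h2]
    simp only [sectFun]
    simp only [sectFun] at key
    rw [key]
    simp [treeAut.length_apply g.2]
  · show sectFun _ _ [] = []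
    simp only [sectFun, List.append_nil]
    exact List.drop_eq_nil_of_le (le_of_eq (treeAut.length_apply g.2 v))
  · intro w x
    show ∃ y, sectFun _ _ (w ++ [x]) = sectFun _ _ w ++ [y]
    obtain ⟨y, hy⟩ := g.2.2 (v ++ w) x
    refine ⟨y, ?_⟩
    simp only [sectFun]
    rw [← List.append_assoc, hy, List.drop_append_of_le_length]
    rw [treeAut.length_apply g.2]
    simp

theorem sect_apply {X : Type*} (g : ↥(treeAut X)) (v w : List X) :
    ((sect g v : ↥(treeAut X)) : Equiv.Perm (List X)) w
      = sectFun (g : Equiv.Perm (List X)) v w := rfl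

theorem sect_nil {X : Type*} (g : ↥(treeAut X)) : sect g [] = g := by
  apply Subtype.ext
  apply Equiv.ext
  intro w
  rw [sect_apply]
  simp [sectFun]

theorem sect_append {X : Type*} (g : ↥(treeAut X)) (v u : List X) :
    sect g (v ++ u) = sect (sect g v) u := by
  apply Subtype.ext
  apply Equiv.ext
  intro w
  show sectFun (g : Equiv.Perm (List X)) (v ++ u) w
    = sectFun ((sect g v : ↥(treeAut X)) : Equiv.Perm (List X)) u w
  simp only [sectFun, sect_apply]
  rw [List.append_assoc, List.drop_drop, List.length_append, Nat.add_comm]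

theorem sect_one {X : Type*} (v : List X) : sect (1 : ↥(treeAut X)) v = 1 := by
  apply Subtype.ext
  apply Equiv.ext
  intro w
  rw [sect_apply]
  simp [sectFun]

theorem sect_mul {X : Type*} (g h : ↥(treeAut X)) (v : List X) :
    sect (g * h) v = sect g ((h : Equiv.Perm (List X)) v) * sect h v := by
  apply Subtype.ext
  apply Equiv.ext
  intro w
  show (((g * h : ↥(treeAut X)) : Equiv.Perm (List X)) (v ++ w)).drop v.length
      = ((g : Equiv.Perm (List X)) ((h : Equiv.Perm (List X)) v
          ++ sectFun (h : Equiv.Perm (List X)) v w)).drop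
            ((h : Equiv.Perm (List X)) v).length
  have hcoe : ((g * h : ↥(treeAut X)) : Equiv.Perm (List X)) (v ++ w)
      = (g : Equiv.Perm (List X)) ((h : Equiv.Perm (List X)) (v ++ w)) := rfl
  have hh := treeAut.apply_append h.2 v w
  rw [hcoe, hh, treeAut.length_apply h.2]

theorem sect_inv {X : Type*} (g : ↥(treeAut X)) (v : List X) :
    sect g⁻¹ v = (sect g (((g : Equiv.Perm (List X))⁻¹) v))⁻¹ := by
  have h1 : sect (g * g⁻¹) v = 1 := by rw [mul_inv_cancel, sect_one]
  have h2 := (sect_mul g g⁻¹ v).symm.trans h1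
  exact eq_inv_of_mul_eq_one_right h2

/-- The automorphism group of the finite subtree `X^[d]` of words of length at most `d`
is modelled inside the permutations of the set of such words. -/
abbrev Pat (X : Type*) (d : ℕ) := Equiv.Perm {l : List X // l.length ≤ d}

/-- The restriction homomorphism `Aut X* → Sym(X^[d])`. -/
def restr (X : Type*) (d : ℕ) : ↥(treeAut X) →* Pat X d where
  toFun g :=
    { toFun := fun w => ⟨(g : Equiv.Perm (List X)) w.1,
        by rw [treeAut.length_apply g.2]; exact w.2⟩
      invFun := fun w => ⟨(g : Equiv.Perm (List X))⁻¹ w.1,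
        by rw [treeAut.length_apply ((treeAut X).inv_mem g.2)]; exact w.2⟩
      left_inv := fun w => by
        apply Subtype.ext
        simp
      right_inv := fun w => by
        apply Subtype.ext
        simp }
  map_one' := by
    apply Equiv.ext
    intro w
    rfl
  map_mul' := fun g h => by
    apply Equiv.ext
    intro w
    rfl

/-- `Aut X^[d]`: the automorphism group of the finite tree `X^[d]`, realized as the
image of `Aut X*` under restriction (every automorphism of the finite tree extends). -/
def finAut (X : Type*) (d : ℕ) : Subgroup (Pat X d) := (restr X d).range

/-- The `n`-th level stabilizer in `Aut X*`: automorphisms fixing all words of length `≤ n`. -/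
def levelStab (X : Type*) (n : ℕ) : Subgroup ↥(treeAut X) := (restr X n).ker

/-- The self-similar group of finite type `G_P` given by a pattern group `P ≤ Aut X^[d]`:
all tree automorphisms all of whose sections restrict to elements of `P` on `X^[d]`. -/
def GP (X : Type*) (d : ℕ) (P : Subgroup (Pat X d)) : Subgroup ↥(treeAut X) where
  carrier := {g | ∀ v : List X, restr X d (sect g v) ∈ P}
  one_mem' := fun v => by rw [sect_one, map_one]; exact P.one_mem
  mul_mem' := fun {a b} ha hb v => by
    rw [sect_mul, map_mul]; exact P.mul_mem (ha _) (hb v)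
  inv_mem' := fun {a} ha v => by
    rw [sect_inv, map_inv]; exact P.inv_mem (ha _)

theorem mem_GP {X : Type*} {d : ℕ} {P : Subgroup (Pat X d)} (g : ↥(treeAut X)) :
    g ∈ GP X d P ↔ ∀ v : List X, restr X d (sect g v) ∈ P := Iff.rfl

/-- The edge relation `a →^x b` of the pattern graph `Γ_P`: the section of the pattern `a`
at the letter `x` agrees with the pattern `b` on `X^[d-1]`. -/
def patEdge (X : Type*) (d : ℕ) (a : Pat X d) (x : X) (b : Pat X d) : Prop :=
  ∀ (w : List X) (hw : w.length ≤ d - 1) (hw' : (x :: w).length ≤ d),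
    ((a ⟨x :: w, hw'⟩ : {l : List X // l.length ≤ d}) : List X).tail
      = ((b ⟨w, le_trans hw (Nat.sub_le d 1)⟩ : {l : List X // l.length ≤ d}) : List X)

/-- The subgroup of `Sym(X^[d])` of elements fixing all words of length at most `k`. -/
def patLevelStab (X : Type*) (d k : ℕ) : Subgroup (Pat X d) where
  carrier := {a | ∀ (w : List X) (hw : w.length ≤ d), w.length ≤ k → a ⟨w, hw⟩ = ⟨w, hw⟩}
  one_mem' := fun _ _ _ => rfl
  mul_mem' := fun {a b} ha hb w hw hk => by
    have h1 := hb w hw hk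
    have h2 := ha w hw hk
    show a (b ⟨w, hw⟩) = ⟨w, hw⟩
    rw [h1, h2]
  inv_mem' := fun {a} ha w hw hk => by
    have h1 := ha w hw hk
    have h2 : a⁻¹ (a ⟨w, hw⟩) = ⟨w, hw⟩ := by simp
    rwa [h1] at h2

/-- Level-transitivity: the group acts transitively on every level `X^n` of the tree. -/
def LevelTrans {X : Type*} (G : Subgroup ↥(treeAut X)) : Prop :=
  ∀ u v : List X, u.length = v.length → ∃ g ∈ G, (g : Equiv.Perm (List X)) u = v

/-- Topological finite generation of a closed subgroup `G ≤ Aut X*`, expressed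
concretely: some finite subset of `G` generates a subgroup which is dense in `G`
for the profinite (congruence) topology of `Aut X*`. -/
def TopFG {X : Type*} (G : Subgroup ↥(treeAut X)) : Prop :=
  ∃ S : Finset ↥(treeAut X), (S : Set ↥(treeAut X)) ⊆ (G : Set ↥(treeAut X)) ∧
    ∀ g ∈ G, ∀ n : ℕ, ∃ h ∈ Subgroup.closure (S : Set ↥(treeAut X)),
      ∀ w : List X, w.length ≤ n →
        (h : Equiv.Perm (List X)) w = (g : Equiv.Perm (List X)) w


/-- A pattern group `P` of depth `d` is minimal if every pattern group defining the same
self-similar group of finite type contains it. -/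
def IsMinimalPattern (X : Type*) (d : ℕ) (P : Subgroup (Pat X d)) : Prop :=
  ∀ Q : Subgroup (Pat X d), Q ≤ finAut X d → GP X d P = GP X d Q → P ≤ Q

section PatternGroup

variable {X : Type*} {d : ℕ}

theorem sect_mem_GP {P : Subgroup (Pat X d)} {g : ↥(treeAut X)}
    (hg : g ∈ GP X d P) (v : List X) : sect g v ∈ GP X d P := fun u => by
  rw [← sect_append]
  exact hg (v ++ u)

theorem restr_mem_of_mem_GP {P : Subgroup (Pat X d)} {g : ↥(treeAut X)}
    (hg : g ∈ GP X d P) : restr X d g ∈ P := by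
  simpa only [sect_nil] using hg []

theorem GP_mono {P R : Subgroup (Pat X d)} (h : P ≤ R) :
    GP X d P ≤ GP X d R := fun _ hg v => h (hg v)

/-- Restricting `G_P` to `X^[d]` and forming `G_R` are adjoint, since `G_P` is closed
under sections. -/
theorem map_restr_GP_le_iff {P R : Subgroup (Pat X d)} :
    Subgroup.map (restr X d) (GP X d P) ≤ R ↔ GP X d P ≤ GP X d R := by
  constructor
  · intro h g hg v
    exact h ⟨sect g v, sect_mem_GP hg v, rfl⟩
  · rintro h _ ⟨g, hg, rfl⟩
    exact restr_mem_of_mem_GP (h hg)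

theorem map_restr_GP_le (P : Subgroup (Pat X d)) :
    Subgroup.map (restr X d) (GP X d P) ≤ P :=
  map_restr_GP_le_iff.2 le_rfl

theorem GP_map_restr_GP (P : Subgroup (Pat X d)) :
    GP X d (Subgroup.map (restr X d) (GP X d P)) = GP X d P :=
  le_antisymm (GP_mono (map_restr_GP_le P)) (map_restr_GP_le_iff.1 le_rfl)

theorem isMinimalPattern_map_restr_GP (P : Subgroup (Pat X d)) :
    IsMinimalPattern X d (Subgroup.map (restr X d) (GP X d P)) := fun R _ hR =>
  map_restr_GP_le_iff.2 (by rw [← hR, GP_map_restr_GP])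

theorem map_restr_le_finAut (G : Subgroup ↥(treeAut X)) :
    Subgroup.map (restr X d) G ≤ finAut X d :=
  Subgroup.map_le_range _ _

theorem IsMinimalPattern.antisymm {P R : Subgroup (Pat X d)}
    (hP : IsMinimalPattern X d P) (hR : IsMinimalPattern X d R) (hPfin : P ≤ finAut X d)
    (hRfin : R ≤ finAut X d) (h : GP X d P = GP X d R) : P = R :=
  le_antisymm (hP R hRfin h) (hR P hPfin h.symm)

end PatternGroup

theorem statement8_general {X : Type*} (d : ℕ)
    (P : Subgroup (Pat X d)) :
    Subgroup.map (restr X d) (GP X d P) ≤ P ∧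
    GP X d (Subgroup.map (restr X d) (GP X d P)) = GP X d P ∧
    IsMinimalPattern X d (Subgroup.map (restr X d) (GP X d P)) ∧
    ∀ R : Subgroup (Pat X d), R ≤ finAut X d → IsMinimalPattern X d R →
      GP X d R = GP X d P → R = Subgroup.map (restr X d) (GP X d P) := by
  refine ⟨map_restr_GP_le P, GP_map_restr_GP P, isMinimalPattern_map_restr_GP P, ?_⟩
  intro R hRfin hRmin hRP
  exact hRmin.antisymm (isMinimalPattern_map_restr_GP P) hRfin (map_restr_le_finAut _)
    (by rw [hRP, GP_map_restr_GP])

/-- `Q = G_P|_(X^[d])` satisfies `Q ≤ P`, `G_Q = G_P`, and `Q` is minimal;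
moreover it is the unique minimal pattern group of depth `d` defining `G_P`. -/
theorem statement8 {X : Type*} [Fintype X] [Nontrivial X] (d : ℕ) (hd : 1 ≤ d)
    (P : Subgroup (Pat X d)) (hP : P ≤ finAut X d) :
    Subgroup.map (restr X d) (GP X d P) ≤ P ∧
    GP X d (Subgroup.map (restr X d) (GP X d P)) = GP X d P ∧
    IsMinimalPattern X d (Subgroup.map (restr X d) (GP X d P)) ∧
    ∀ R : Subgroup (Pat X d), R ≤ finAut X d → IsMinimalPattern X d R →
      GP X d R = GP X d P → R = Subgroup.map (restr X d) (GP X d P) :=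
  statement8_general d P
end

section
/- In the pattern graph Γ_P of a minimal pattern group P with m = |St_P(d-1)|, every vertex has exactly m outgoing edges labeled by x, for every letter x ∈ X. -/
open List

/-! The `x`-labelled out-neighbours of `a` in `Γ_P` form a left coset of `St_P(d-1)`:
if `b₀` is one of them, then `b` is one iff `b₀⁻¹ b` fixes `X^[d-1]`. Minimality provides
such a `b₀` inside `P`, namely the restriction of the section at `x` of a lift of `a` to `G_P`. -/

theorem Subgroup.card_mem_and_inv_mul_mem {G : Type*} [Group G] {H K : Subgroup G} {g : G}
    (hg : g ∈ H) : Nat.card {b : G // b ∈ H ∧ g⁻¹ * b ∈ K} = Nat.card ↥(H ⊓ K) :=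
  Nat.card_congr <| (Equiv.mulLeft g⁻¹).subtypeEquiv fun b => by
    rw [Subgroup.mem_inf, Equiv.coe_mulLeft, H.mul_mem_cancel_left (H.inv_mem hg)]

theorem inv_mul_mem_patLevelStab_iff {X : Type*} {d k : ℕ} {b₀ b : Pat X d} :
    b₀⁻¹ * b ∈ patLevelStab X d k ↔
      ∀ (w : List X) (hw : w.length ≤ d), w.length ≤ k → b ⟨w, hw⟩ = b₀ ⟨w, hw⟩ := by
  refine forall₂_congr fun w hw => imp_congr_right fun _ => ?_
  rw [Equiv.Perm.mul_apply, Equiv.Perm.inv_eq_iff_eq]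

theorem patEdge_iff_inv_mul_mem_patLevelStab {X : Type*} {d : ℕ} (hd : 1 ≤ d)
    {a b₀ b : Pat X d} {x : X} (hb₀ : patEdge X d a x b₀) :
    patEdge X d a x b ↔ b₀⁻¹ * b ∈ patLevelStab X d (d - 1) := by
  rw [inv_mul_mem_patLevelStab_iff]
  constructor
  · intro hb w hw hk
    have hxw : (x :: w).length ≤ d := by simp only [List.length_cons]; omega
    exact Subtype.ext <| (hb w hk hxw).symm.trans (hb₀ w hk hxw)
  · intro hagree w hk hxw
    rw [hagree w _ hk]
    exact hb₀ w hk hxw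

theorem patEdge_restr_sect {X : Type*} (d : ℕ) (g : ↥(treeAut X)) (x : X) :
    patEdge X d (restr X d g) x (restr X d (sect g [x])) := by
  intro w _ _
  obtain ⟨y, hy⟩ := List.length_eq_one_iff.mp (treeAut.length_apply g.2 [x])
  show ((g : Equiv.Perm (List X)) ([x] ++ w)).tail = sectFun (g : Equiv.Perm (List X)) [x] w
  rw [treeAut.apply_append g.2, hy]
  rfl

theorem statement11_general {X : Type*} (d : ℕ) (hd : 1 ≤ d)
    (P : Subgroup (Pat X d))
    (hmin : P = Subgroup.map (restr X d) (GP X d P))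
    (a : Pat X d) (ha : a ∈ P) (x : X) :
    Nat.card {b : Pat X d // b ∈ P ∧ patEdge X d a x b}
      = Nat.card ↥(P ⊓ patLevelStab X d (d - 1)) := by
  obtain ⟨g, hg, rfl⟩ : a ∈ Subgroup.map (restr X d) (GP X d P) := hmin ▸ ha
  have hedge := patEdge_restr_sect d g x
  simp_rw [patEdge_iff_inv_mul_mem_patLevelStab hd hedge]
  exact Subgroup.card_mem_and_inv_mul_mem (hg [x])

/-- in the pattern graph of a minimal pattern group `P` with
`m = |St_P(d-1)|`, every vertex `a ∈ P` has exactly `m` outgoing edges labeled by `x`,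
for every letter `x`. -/
theorem statement11 {X : Type*} [Fintype X] [Nontrivial X] (d : ℕ) (hd : 1 ≤ d)
    (P : Subgroup (Pat X d)) (hP : P ≤ finAut X d)
    (hmin : P = Subgroup.map (restr X d) (GP X d P))
    (a : Pat X d) (ha : a ∈ P) (x : X) :
    Nat.card {b : Pat X d // b ∈ P ∧ patEdge X d a x b}
      = Nat.card ↥(P ⊓ patLevelStab X d (d - 1)) :=
  statement11_general d hd P hmin a ha x
end

section
/- Let G_P be a self-similar group of finite type given by a pattern group of depth d. For every h ∈ St_{G_P}(d-1) and every vertex v ∈ X*, the unique automorphism g of X* that fixes all vertices outside vX* and has section g_{(v)} = h belongs to G_P. -/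
open List

/-!
An automorphism `g` fixing everything outside `vX*` also maps `vX*` onto itself, so it fixes `v`.
Its sections inside `vX*` are sections of `h`, whose patterns lie in `P`. At a vertex `u` outside
`vX*` the pattern of `g` is trivial: a word `u ++ w` with `|w| ≤ d` either lies outside `vX*`, or
`u` is a proper prefix of `v` and `u ++ w = v ++ w'` with `|w'| ≤ d - 1`, a word fixed by `h`.
-/

namespace treeAut

variable {X : Type*}

theorem apply_eq_self_of_forall_not_prefix {g : Equiv.Perm (List X)} (hg : g ∈ treeAut X)
    {v : List X} (hfix : ∀ u, ¬ v <+: u → g u = u) : g v = v := by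
  have hv : v <+: g v := by
    by_contra hnot
    exact hnot (by rw [g.injective (hfix _ hnot)])
  exact (hv.eq_of_length (treeAut.length_apply hg v).symm).symm

theorem apply_append_eq_self {g : ↥(treeAut X)} {v w : List X}
    (hv : (g : Equiv.Perm (List X)) v = v)
    (hw : ((sect g v : ↥(treeAut X)) : Equiv.Perm (List X)) w = w) :
    (g : Equiv.Perm (List X)) (v ++ w) = v ++ w := by
  rw [treeAut.apply_append g.2, hv, ← sect_apply, hw]

theorem restr_sect_eq_one {g : ↥(treeAut X)} {u : List X} {d : ℕ}
    (hfix : ∀ w : List X, w.length ≤ d → (g : Equiv.Perm (List X)) (u ++ w) = u ++ w) :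
    restr X d (sect g u) = 1 := by
  refine Equiv.ext fun ⟨w, hw⟩ => Subtype.ext ?_
  show sectFun (g : Equiv.Perm (List X)) u w = w
  rw [sectFun, hfix w hw, List.drop_left]

theorem apply_append_eq_self_of_not_prefix {g : ↥(treeAut X)} {v u w : List X} {d : ℕ}
    (hfix : ∀ u, ¬ v <+: u → (g : Equiv.Perm (List X)) u = u)
    (hst : ∀ w : List X, w.length ≤ d - 1 →
      ((sect g v : ↥(treeAut X)) : Equiv.Perm (List X)) w = w)
    (hu : ¬ v <+: u) (hw : w.length ≤ d) :
    (g : Equiv.Perm (List X)) (u ++ w) = u ++ w := by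
  by_cases hvuw : v <+: u ++ w
  · obtain ⟨s, rfl⟩ : u <+: v :=
      (List.prefix_or_prefix_of_prefix (List.prefix_append u w) hvuw).resolve_right hu
    obtain ⟨w', rfl⟩ : s <+: w := List.prefix_append_right_inj u |>.mp hvuw
    have hs : s ≠ [] := by
      rintro rfl
      exact hu (by simp)
    have hw' : w'.length ≤ d - 1 := by
      have := List.length_pos_iff.mpr hs
      simp only [List.length_append] at hw
      omega
    rw [← List.append_assoc]
    exact apply_append_eq_self (apply_eq_self_of_forall_not_prefix g.2 hfix) (hst w' hw')
  · exact hfix _ hvuw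

end treeAut

theorem statement13_general {X : Type*} (d : ℕ)
    (P : Subgroup (Pat X d))
    (h g : ↥(treeAut X)) (hh : h ∈ GP X d P)
    (hst : ∀ w : List X, w.length ≤ d - 1 → (h : Equiv.Perm (List X)) w = w)
    (v : List X)
    (hg1 : ∀ u : List X, ¬ v <+: u → (g : Equiv.Perm (List X)) u = u)
    (hg2 : sect g v = h) :
    g ∈ GP X d P := by
  subst hg2
  intro u
  by_cases hvu : v <+: u
  · obtain ⟨t, rfl⟩ := hvu
    rw [sect_append]
    exact hh t
  · rw [treeAut.restr_sect_eq_one fun w hw =>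
      treeAut.apply_append_eq_self_of_not_prefix hg1 hst hvu hw]
    exact P.one_mem

/-- for `h ∈ St_(G_P)(d-1)` and a vertex `v`, the automorphism fixing
everything outside the subtree `vX*` and acting as `h` at `v` belongs to `G_P`. -/
theorem statement13 {X : Type*} [Fintype X] [Nontrivial X] (d : ℕ) (hd : 1 ≤ d)
    (P : Subgroup (Pat X d)) (hP : P ≤ finAut X d)
    (h g : ↥(treeAut X)) (hh : h ∈ GP X d P)
    (hst : ∀ w : List X, w.length ≤ d - 1 → (h : Equiv.Perm (List X)) w = w)
    (v : List X)
    (hg1 : ∀ u : List X, ¬ v <+: u → (g : Equiv.Perm (List X)) u = u)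
    (hg2 : sect g v = h) :
    g ∈ GP X d P :=
  statement13_general d P h g hh hst v hg1 hg2
end
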